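/- For Grassmann monomials f = ξ_{i_1}⋯ξ_{i_r} and g = ξ_{j_1}⋯ξ_{j_s} in Λ(N), the λ-bracket [f_λ g] = (r-2)∂(fg) + (-1)^r Σ_{i=1}^N (∂_i f)(∂_i g) + λ(r+s-4) fg on K_N = C[∂] ⊗ Λ(N), extended by conformal sesquilinearity ([∂a_λ b] = -λ[a_λ b], [a_λ ∂b] = (λ+∂)[a_λ b]), satisfies conformal skew-symmetry: [f_λ g] = -(-1)^{p(f)p(g)} [g_{-λ-∂} f]. -/
import Mathlib


/-!
STATEMENT 7: conformal skew-symmetry of the λ-bracket of `K_N = ℂ[∂] ⊗ Λ(N)`.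
For Grassmann monomials `f = ξ_{i_1}⋯ξ_{i_r}` (`r = |s|`) and `g = ξ_{j_1}⋯ξ_{j_σ}`
(`σ = |u|`), the λ-bracket is
`[f_λ g] = (r-2) ∂(fg) + (-1)^r Σᵢ (∂ᵢf)(∂ᵢg) + λ (r+σ-4) fg`,
and one has `[f_λ g] = -(-1)^{p(f)p(g)} [g_{-λ-∂} f]`, where in `[g_{-λ-∂} f]` the
substitution `μ ↦ -λ-∂` is applied to `[g_μ f]`, `∂` acting on the coefficients.

Elements of `ℂ[λ] ⊗ ℂ[∂] ⊗ Λ(N)` are encoded as finitely supported functions on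
`ℕ × ℕ × Finset (Fin N)` (power of `λ`, power of `∂`, Grassmann monomial).
-/

open Finset in
/-- Koszul inversion count. -/
def invCount {N : ℕ} (s u : Finset (Fin N)) : ℕ :=
  ((s ×ˢ u).filter fun p => p.2 < p.1).card

/-- `ℂ[λ] ⊗ K_N`. -/
abbrev LKN (N : ℕ) := (ℕ × ℕ × Finset (Fin N)) →₀ ℂ

/-- the Grassmann product `ξ_s ξ_u` as an element of `ℂ[λ] ⊗ K_N`. -/
noncomputable def pr {N : ℕ} (s u : Finset (Fin N)) : LKN N :=
  if Disjoint s u then Finsupp.single (0, 0, s ∪ u) ((-1 : ℂ) ^ invCount s u) else 0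

/-- multiplication by `∂`. -/
noncomputable def shiftD {N : ℕ} (x : LKN N) : LKN N :=
  Finsupp.mapDomain (fun p => (p.1, p.2.1 + 1, p.2.2)) x

/-- multiplication by `λ`. -/
noncomputable def shiftL {N : ℕ} (x : LKN N) : LKN N :=
  Finsupp.mapDomain (fun p => (p.1 + 1, p.2.1, p.2.2)) x

/-- the sign/indicator `∂ᵢ ξ_s = epsv i s • ξ_{s \ i}`. -/
noncomputable def epsv {N : ℕ} (i : Fin N) (s : Finset (Fin N)) : ℂ :=
  if i ∈ s then (-1 : ℂ) ^ (s.filter (· < i)).card else 0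

/-- the product `(∂ᵢ ξ_s)(∂ᵢ ξ_u)`. -/
noncomputable def dpr {N : ℕ} (i : Fin N) (s u : Finset (Fin N)) : LKN N :=
  (epsv i s * epsv i u) • pr (s.erase i) (u.erase i)

/-- the λ-bracket `[ξ_s\,_λ ξ_u] = (r-2)∂(ξ_sξ_u) + (-1)^r Σᵢ(∂ᵢξ_s)(∂ᵢξ_u) + λ(r+σ-4)ξ_sξ_u`. -/
noncomputable def lamBr {N : ℕ} (s u : Finset (Fin N)) : LKN N :=
  ((s.card : ℂ) - 2) • shiftD (pr s u)
    + ((-1 : ℂ) ^ s.card) • ∑ i : Fin N, dpr i s u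
    + ((s.card : ℂ) + (u.card : ℂ) - 4) • shiftL (pr s u)

/-- `[ξ_u\,_{-λ-∂} ξ_s]`: substitute `μ = -λ-∂` in `[ξ_u\,_μ ξ_s]`. -/
noncomputable def lamBrSub {N : ℕ} (u s : Finset (Fin N)) : LKN N :=
  ((u.card : ℂ) - 2) • shiftD (pr u s)
    + ((-1 : ℂ) ^ u.card) • ∑ i : Fin N, dpr i u s
    + ((u.card : ℂ) + (s.card : ℂ) - 4) • (-(shiftL (pr u s)) - shiftD (pr u s))

lemma npc (a b : ℕ) (h : a % 2 = b % 2) : (-1 : ℂ) ^ a = (-1 : ℂ) ^ b := by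
  conv_lhs => rw [← Nat.div_add_mod a 2]
  conv_rhs => rw [← Nat.div_add_mod b 2]
  rw [h, pow_add, pow_add, pow_mul, pow_mul, neg_one_sq, one_pow, one_pow]

open Finset in
lemma invCount_add {N : ℕ} (s u : Finset (Fin N)) (h : Disjoint s u) :
    invCount s u + invCount u s = s.card * u.card := by
  unfold invCount
  have hb : ((u ×ˢ s).filter fun p => p.2 < p.1).card
      = ((s ×ˢ u).filter fun p => p.1 < p.2).card := by
    apply Finset.card_bij' (fun p _ => (p.2, p.1)) (fun p _ => (p.2, p.1))
    all_goals intro p hp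
    all_goals try rfl
    all_goals simp only [Finset.mem_filter, Finset.mem_product] at hp ⊢
    all_goals exact ⟨⟨hp.1.2, hp.1.1⟩, hp.2⟩
  rw [hb]
  have hfc : ((s ×ˢ u).filter fun p => p.1 < p.2)
      = ((s ×ˢ u).filter fun p => ¬ p.2 < p.1) := by
    apply Finset.filter_congr
    intro p hp
    simp only [Finset.mem_product] at hp
    have hne : p.1 ≠ p.2 := fun he => (Finset.disjoint_left.mp h hp.1) (he ▸ hp.2)
    exact ⟨fun hlt => not_lt_of_gt hlt,
      fun hnl => (lt_or_gt_of_ne hne).resolve_right hnl⟩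
  rw [hfc, Finset.card_filter_add_card_filter_not, Finset.card_product]

lemma pr_swap {N : ℕ} (s u : Finset (Fin N)) :
    pr u s = ((-1 : ℂ) ^ (s.card * u.card)) • pr s u := by
  unfold pr
  by_cases h : Disjoint s u
  · rw [if_pos h.symm, if_pos h, Finsupp.smul_single, Finset.union_comm]
    congr 1
    rw [smul_eq_mul, ← pow_add]
    apply npc
    have h2 := invCount_add s u h
    generalize s.card * u.card = c at h2 ⊢
    omega
  · rw [if_neg h, if_neg (fun hh => h hh.symm), smul_zero]

lemma dpr_swap {N : ℕ} (i : Fin N) (s u : Finset (Fin N)) :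
    dpr i u s = ((-1 : ℂ) ^ (s.card * u.card + s.card + u.card + 1)) • dpr i s u := by
  unfold dpr
  by_cases hs : i ∈ s
  · by_cases hu : i ∈ u
    · rw [pr_swap, smul_smul, smul_smul]
      congr 1
      obtain ⟨a, ha⟩ : ∃ a, s.card = a + 1 :=
        ⟨s.card - 1, by have := Finset.card_pos.mpr ⟨i, hs⟩; omega⟩
      obtain ⟨b, hb⟩ : ∃ b, u.card = b + 1 :=
        ⟨u.card - 1, by have := Finset.card_pos.mpr ⟨i, hu⟩; omega⟩
      have hse : (s.erase i).card = a := by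
        rw [Finset.card_erase_of_mem hs, ha]
        omega
      have hue : (u.erase i).card = b := by
        rw [Finset.card_erase_of_mem hu, hb]
        omega
      rw [hse, hue, ha, hb]
      have key : (-1 : ℂ) ^ (a * b) = (-1 : ℂ) ^ ((a+1) * (b+1) + (a+1) + (b+1) + 1) := by
        apply npc
        have : (a+1) * (b+1) = a * b + a + b + 1 := by ring
        rw [this]
        generalize a * b = c
        omega
      rw [← key]
      ring
    · simp [epsv, hu]
  · simp [epsv, hs]

lemma shiftD_smul {N : ℕ} (c : ℂ) (x : LKN N) : shiftD (c • x) = c • shiftD x := by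
  unfold shiftD; exact Finsupp.mapDomain_smul c x

lemma shiftL_smul {N : ℕ} (c : ℂ) (x : LKN N) : shiftL (c • x) = c • shiftL x := by
  unfold shiftL; exact Finsupp.mapDomain_smul c x

theorem KN_lambda_bracket_skew {N : ℕ} (s u : Finset (Fin N)) :
    lamBr s u = (-((-1 : ℂ) ^ (s.card * u.card))) • lamBrSub u s := by
  unfold lamBr lamBrSub
  have hsum : ∑ i : Fin N, dpr i u s
      = ((-1 : ℂ) ^ (s.card * u.card + s.card + u.card + 1)) • ∑ i : Fin N, dpr i s u := by
    rw [Finset.smul_sum]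
    exact Finset.sum_congr rfl fun i _ => dpr_swap i s u
  rw [hsum, pr_swap s u, shiftD_smul, shiftL_smul]
  set A := shiftD (pr s u) with hA
  set B := ∑ i : Fin N, dpr i s u with hB
  set C := shiftL (pr s u) with hC
  have E : ∀ n : ℕ, (-1 : ℂ) ^ (n * 2) = 1 := by
    intro n
    rw [mul_comm n 2, pow_mul, neg_one_sq, one_pow]
  have hδ : (-1 : ℂ) ^ (s.card * u.card) *
      ((-1 : ℂ) ^ u.card * (-1 : ℂ) ^ (s.card * u.card + s.card + u.card + 1))
      = -(-1 : ℂ) ^ s.card := by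
    rw [← pow_add, ← pow_add]
    have h1 : (-1 : ℂ) ^ (s.card + 1) = -(-1 : ℂ) ^ s.card := by
      rw [pow_succ]; ring
    rw [← h1]
    apply npc
    generalize s.card * u.card = c
    omega
  match_scalars
  · ring_nf
    simp only [E]
    ring
  · ring_nf
    simp only [E]
    ring_nf
  · ring_nf
    simp only [E]
    ring
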